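/- For every probability measure μ on the projective Hilbert space (with its Borel σ-algebra), there exists a unique density operator W_μ such that tr(W_μ A) = ∫ tr(PA) dμ(P) for all bounded self-adjoint operators A. -/

import Mathlib

open MeasureTheory Topology Filter

/-- The rank-one operator `|φ⟩⟨φ|`. -/
noncomputable def rankOne {H : Type*} [NormedAddCommGroup H] [InnerProductSpace ℂ H]
    (φ : H) : H →L[ℂ] H := (innerSL ℂ φ).smulRight φ

/-- The set of rank-one orthogonal projections (pure states / projective Hilbert space). -/
noncomputable def projSet (H : Type*) [NormedAddCommGroup H] [InnerProductSpace ℂ H] :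
    Set (H →L[ℂ] H) := {T | ∃ φ : H, ‖φ‖ = 1 ∧ T = rankOne φ}

/-- The trace of an operator computed along a Hilbert basis. -/
noncomputable def traceAlong {H ι : Type*} [NormedAddCommGroup H] [InnerProductSpace ℂ H]
    (b : HilbertBasis ι ℂ H) (A : H →L[ℂ] H) : ℂ :=
  ∑' i, inner ℂ (b i) (A (b i))

/-- `W` is a density operator: positive, trace class, with trace one
(trace computed along the Hilbert basis `b`). -/
noncomputable def IsDensityOp {H ι : Type*} [NormedAddCommGroup H] [InnerProductSpace ℂ H]
    [CompleteSpace H] (b : HilbertBasis ι ℂ H) (W : H →L[ℂ] H) : Prop :=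
  W.IsPositive ∧ HasSum (fun i => (inner ℂ (b i) (W (b i)) : ℂ)) 1

/-! `W_μ` is the barycenter `∫ P dμ(P)`, a Bochner integral in `H →L[ℂ] H`: the rank-one
projections have norm one and form a separable set, so the integral exists. It is positive as an
integral of positive operators. For the trace identity one exchanges the sum along the basis with
the integral; this is legitimate because, for `P = |φ⟩⟨φ|`, Cauchy–Schwarz in `ℓ²` gives
`∑ |⟪bᵢ, P A bᵢ⟫| = ∑ |⟪A† φ, bᵢ⟫| |⟪bᵢ, φ⟫| ≤ ‖A‖`. Uniqueness: testing against `A = |ψ⟩⟨ψ|`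
gives `tr(W A) = ⟪ψ, W ψ⟫`, and a complex operator is determined by its quadratic form. -/

open scoped InnerProductSpace

theorem Orthonormal.countable {𝕜 E ι : Type*} [RCLike 𝕜] [NormedAddCommGroup E]
    [InnerProductSpace 𝕜 E] [TopologicalSpace.SeparableSpace E] {v : ι → E}
    (hv : Orthonormal 𝕜 v) : Countable ι := by
  have hdist : Pairwise fun i j => 1 ≤ dist (v i) (v j) := fun i j hij => by
    have : dist (v i) (v j) ^ 2 = 2 := by
      rw [dist_eq_norm, @norm_sub_sq 𝕜, hv.1 i, hv.1 j, hv.2 hij]; norm_num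
    nlinarith [dist_nonneg (x := v i) (y := v j)]
  refine Pairwise.countable_of_isOpen_disjoint (s := fun i => Metric.ball (v i) (1 / 2))
    (fun i j hij => Metric.ball_disjoint_ball ?_) (fun _ => Metric.isOpen_ball)
    fun i => ⟨v i, Metric.mem_ball_self (by norm_num)⟩
  linarith [hdist hij]

theorem HilbertBasis.tsum_enorm_inner_mul_enorm_inner_le {𝕜 E ι : Type*} [RCLike 𝕜]
    [NormedAddCommGroup E] [InnerProductSpace 𝕜 E] (b : HilbertBasis ι 𝕜 E) (x y : E) :
    ∑' i, ‖⟪x, b i⟫_𝕜‖ₑ * ‖⟪b i, y⟫_𝕜‖ₑ ≤ ‖x‖ₑ * ‖y‖ₑ := by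
  obtain ⟨hsum, hle⟩ :=
    lp.tsum_mul_le_mul_norm (p := 2) (q := 2) (by simpa using Real.HolderConjugate.two_two)
      (b.repr x) (b.repr y)
  simp only [HilbertBasis.repr_apply_apply, LinearIsometryEquiv.norm_map] at hsum hle
  simp only [← ofReal_norm, norm_inner_symm x, ← ENNReal.ofReal_mul (norm_nonneg _)]
  rw [← ENNReal.ofReal_tsum_of_nonneg (fun i => by positivity) hsum]
  exact ENNReal.ofReal_le_ofReal hle

section RankOne

variable {H : Type*} [NormedAddCommGroup H] [InnerProductSpace ℂ H]

theorem rankOne_eq_innerProductSpace_rankOne (φ : H) :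
    rankOne φ = InnerProductSpace.rankOne ℂ φ φ :=
  rfl

theorem rankOne_apply (φ x : H) : rankOne φ x = ⟪φ, x⟫_ℂ • φ := rfl

theorem continuous_rankOne : Continuous (rankOne (H := H)) := by
  change Continuous fun φ : H => ContinuousLinearMap.smulRightL ℂ H H (innerSL ℂ φ) φ
  exact (ContinuousLinearMap.smulRightL ℂ H H).continuous₂.comp
    ((innerSL ℂ).continuous.prodMk continuous_id)

theorem inner_rankOne_mul_apply [CompleteSpace H] (φ : H) (A : H →L[ℂ] H) (x : H) :
    ⟪x, (rankOne φ * A) x⟫_ℂ = ⟪A.adjoint φ, x⟫_ℂ * ⟪x, φ⟫_ℂ := by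
  rw [mul_apply_eq_comp, rankOne_apply, inner_smul_right,
    ContinuousLinearMap.adjoint_inner_left]

theorem traceAlong_mul_rankOne {ι : Type*} (b : HilbertBasis ι ℂ H) (V : H →L[ℂ] H) (ψ : H) :
    traceAlong b (V * rankOne ψ) = ⟪ψ, V ψ⟫_ℂ := by
  have hterm (i : ι) : ⟪b i, (V * rankOne ψ) (b i)⟫_ℂ = ⟪ψ, b i⟫_ℂ * ⟪b i, V ψ⟫_ℂ := by
    rw [mul_apply_eq_comp, rankOne_apply, map_smul, inner_smul_right]
  simp only [traceAlong, hterm, b.tsum_inner_mul_inner]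

theorem eq_of_traceAlong_mul_rankOne {ι : Type*} (b : HilbertBasis ι ℂ H) {V W : H →L[ℂ] H}
    (h : ∀ ψ, traceAlong b (V * rankOne ψ) = traceAlong b (W * rankOne ψ)) : V = W := by
  refine ContinuousLinearMap.coe_injective ((ext_inner_map _ _).mp fun x => ?_)
  have hx := h x
  rw [traceAlong_mul_rankOne, traceAlong_mul_rankOne] at hx
  rw [← inner_conj_symm, ContinuousLinearMap.coe_coe, hx, inner_conj_symm]
  rfl

end RankOne

section Trace

variable {H : Type*} [NormedAddCommGroup H] [InnerProductSpace ℂ H] [CompleteSpace H]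

theorem hasSum_inner_integral_apply {ι X : Type*} [Countable ι] [MeasurableSpace X]
    {μ : Measure X} (b : HilbertBasis ι ℂ H) {F : X → H →L[ℂ] H}
    (hF : Integrable F μ) (hfin : ∫⁻ x, ∑' i, ‖⟪b i, F x (b i)⟫_ℂ‖ₑ ∂μ ≠ ⊤) :
    HasSum (fun i => ⟪b i, (∫ x, F x ∂μ) (b i)⟫_ℂ) (∫ x, traceAlong b (F x) ∂μ) := by
  let g : ι → X → ℂ := fun i x => ⟪b i, F x (b i)⟫_ℂ
  let L (i : ι) : (H →L[ℂ] H) →L[ℂ] ℂ :=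
    (innerSL ℂ (b i)).comp (ContinuousLinearMap.apply ℂ H (b i))
  have hL (i : ι) : ⟪b i, (∫ x, F x ∂μ) (b i)⟫_ℂ = ∫ x, g i x ∂μ :=
    ((L i).integral_comp_comm hF).symm
  have hmeas (i : ι) : AEStronglyMeasurable (g i) μ :=
    (L i).continuous.comp_aestronglyMeasurable hF.1
  have hfin' : ∑' i, ∫⁻ x, ‖g i x‖ₑ ∂μ ≠ ⊤ := by
    rwa [← lintegral_tsum fun i => (hmeas i).enorm]
  have hsum : Summable fun i => ∫ x, g i x ∂μ :=
    .of_norm <| tsum_enorm_ne_top_iff_summable_norm.1 <| ne_top_of_le_ne_top hfin' <|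
      ENNReal.tsum_le_tsum fun i => enorm_integral_le_lintegral_enorm _
  simp only [hL, traceAlong]
  rw [integral_tsum hmeas hfin']
  exact hsum.hasSum

end Trace

section ProjSet

variable {H : Type*} [NormedAddCommGroup H] [InnerProductSpace ℂ H]

theorem norm_of_mem_projSet {T : H →L[ℂ] H} (hT : T ∈ projSet H) : ‖T‖ = 1 := by
  obtain ⟨φ, hφ, rfl⟩ := hT
  rw [rankOne_eq_innerProductSpace_rankOne, InnerProductSpace.norm_rankOne, hφ, one_mul]

theorem isPositive_of_mem_projSet [CompleteSpace H] {T : H →L[ℂ] H} (hT : T ∈ projSet H) :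
    T.IsPositive := by
  obtain ⟨φ, -, rfl⟩ := hT
  exact InnerProductSpace.isPositive_rankOne_self φ

theorem isSeparable_projSet [TopologicalSpace.SeparableSpace H] :
    TopologicalSpace.IsSeparable (projSet H) :=
  (TopologicalSpace.isSeparable_range continuous_rankOne).mono
    (by rintro T ⟨φ, -, rfl⟩; exact ⟨φ, rfl⟩)

instance instSecondCountableTopologyProjSet [TopologicalSpace.SeparableSpace H] :
    SecondCountableTopology (projSet H) :=
  haveI := (isSeparable_projSet (H := H)).separableSpace
  UniformSpace.secondCountable_of_separable _

theorem traceAlong_of_mem_projSet {ι : Type*} (b : HilbertBasis ι ℂ H) {T : H →L[ℂ] H}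
    (hT : T ∈ projSet H) : traceAlong b T = 1 := by
  obtain ⟨φ, hφ, rfl⟩ := hT
  rw [← one_mul (rankOne φ), traceAlong_mul_rankOne, one_apply_eq_self,
    inner_self_eq_norm_sq_to_K, hφ]
  norm_num

theorem tsum_enorm_inner_mul_apply_le_of_mem_projSet [CompleteSpace H] {ι : Type*}
    (b : HilbertBasis ι ℂ H) {T : H →L[ℂ] H} (hT : T ∈ projSet H) (A : H →L[ℂ] H) :
    ∑' i, ‖⟪b i, (T * A) (b i)⟫_ℂ‖ₑ ≤ ‖A‖ₑ := by
  obtain ⟨φ, hφ, rfl⟩ := hT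
  have hφ' : ‖φ‖ₑ = 1 := by simp [enorm_eq_nnnorm, ← NNReal.coe_eq_one, hφ]
  calc ∑' i, ‖⟪b i, (rankOne φ * A) (b i)⟫_ℂ‖ₑ
      = ∑' i, ‖⟪A.adjoint φ, b i⟫_ℂ‖ₑ * ‖⟪b i, φ⟫_ℂ‖ₑ := by
        simp only [inner_rankOne_mul_apply, enorm_mul]
    _ ≤ ‖A.adjoint φ‖ₑ * ‖φ‖ₑ := b.tsum_enorm_inner_mul_enorm_inner_le _ _
    _ ≤ ‖A.adjoint‖ₑ * ‖φ‖ₑ * ‖φ‖ₑ := by gcongr; exact A.adjoint.le_opENorm φ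
    _ = ‖A‖ₑ := by simp [hφ']

end ProjSet

section Barycenter

variable {H : Type*} [NormedAddCommGroup H] [InnerProductSpace ℂ H]
  [MeasurableSpace (projSet H)]

noncomputable def barycenter (μ : Measure (projSet H)) : H →L[ℂ] H :=
  ∫ P, (P : H →L[ℂ] H) ∂μ

theorem isPositive_barycenter [CompleteSpace H] (μ : Measure (projSet H)) :
    (barycenter μ).IsPositive := by
  rw [← ContinuousLinearMap.nonneg_iff_isPositive]
  exact integral_nonneg fun P => (ContinuousLinearMap.nonneg_iff_isPositive _).2
    (isPositive_of_mem_projSet P.2)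

variable [SecondCountableTopology H] [OpensMeasurableSpace (projSet H)]

theorem integrable_coe_projSet (μ : Measure (projSet H)) [IsFiniteMeasure μ] :
    Integrable (fun P : projSet H => (P : H →L[ℂ] H)) μ :=
  (integrable_const (1 : ℝ)).mono' continuous_subtype_val.aestronglyMeasurable
    (ae_of_all _ fun P => (norm_of_mem_projSet P.2).le)

theorem hasSum_inner_barycenter_mul [CompleteSpace H] {ι : Type*} (b : HilbertBasis ι ℂ H)
    (μ : Measure (projSet H)) [IsFiniteMeasure μ] (A : H →L[ℂ] H) :
    HasSum (fun i => ⟪b i, (barycenter μ * A) (b i)⟫_ℂ)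
      (∫ P, traceAlong b ((P : H →L[ℂ] H) * A) ∂μ) := by
  have := b.orthonormal.countable
  have hint := integrable_coe_projSet μ
  rw [barycenter, ← integral_mul_const_of_integrable hint]
  refine hasSum_inner_integral_apply b (hint.mul_const A) (ne_top_of_le_ne_top ?_
    (lintegral_mono fun P => tsum_enorm_inner_mul_apply_le_of_mem_projSet b P.2 A))
  rw [lintegral_const]
  exact ENNReal.mul_ne_top enorm_ne_top (measure_ne_top μ _)

end Barycenter

theorem stmt12_general {H ι : Type*} [NormedAddCommGroup H] [InnerProductSpace ℂ H] [CompleteSpace H]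
    [SecondCountableTopology H] (b : HilbertBasis ι ℂ H)
    [MeasurableSpace ↥(projSet H)] [BorelSpace ↥(projSet H)]
    (μ : Measure ↥(projSet H)) [IsProbabilityMeasure μ] :
    ∃! W : H →L[ℂ] H, IsDensityOp b W ∧
      ∀ A : H →L[ℂ] H, IsSelfAdjoint A →
        traceAlong b (W * A) = ∫ P, traceAlong b (P.1 * A) ∂μ := by
  have htrace := hasSum_inner_barycenter_mul b μ
  refine ⟨barycenter μ, ⟨⟨isPositive_barycenter μ, ?_⟩, fun A _ => (htrace A).tsum_eq⟩, ?_⟩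
  · simpa [traceAlong_of_mem_projSet b (Subtype.prop _)] using htrace 1
  · rintro W ⟨-, hW⟩
    refine eq_of_traceAlong_mul_rankOne b fun ψ => ?_
    rw [hW (rankOne ψ) (InnerProductSpace.isPositive_rankOne_self ψ).isSelfAdjoint]
    exact (htrace _).tsum_eq.symm

theorem stmt12 {H ι : Type*} [NormedAddCommGroup H] [InnerProductSpace ℂ H] [CompleteSpace H]
    [Nontrivial H] [SecondCountableTopology H] (b : HilbertBasis ι ℂ H)
    [MeasurableSpace ↥(projSet H)] [BorelSpace ↥(projSet H)]
    (μ : Measure ↥(projSet H)) [IsProbabilityMeasure μ] :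
    ∃! W : H →L[ℂ] H, IsDensityOp b W ∧
      ∀ A : H →L[ℂ] H, IsSelfAdjoint A →
        traceAlong b (W * A) = ∫ P, traceAlong b (P.1 * A) ∂μ :=
  stmt12_general b μ
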